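/- Fix θ ∈ ℂ. Let q1, p1, q2, p2, u be complex-analytic functions of (t1, t2) on an open domain D ⊆ ℂ², with u nowhere zero, satisfying the Hamiltonian system ∂qₖ/∂tⱼ = ∂Hⱼ/∂pₖ and ∂pₖ/∂tⱼ = −∂Hⱼ/∂qₖ for k, j ∈ {1,2}, where H1 = HG5_1(θ;t1,t2;q1,p1,q2,p2) and H2 = HG5_2(θ;t1,t2;q1,p1,q2,p2), together with the gauge equations ∂u/∂t1 = −q1·u and ∂u/∂t2 = (2t2 − p2)·u. Let D(u) := diag(1,u) and define the 2×2 matrices A4 := diag(0,1), A3 := D(u)⁻¹·[[0, q2],[−1, 0]]·D(u), A2 := D(u)⁻¹·[[−q2, −p1],[−q1, q2+2t2]]·D(u), A1 := D(u)⁻¹·[[p1 − q1q2, p1q1 − (p2 − q2 − 2t2)q2 − θ],[−p2, −p1 + q1q2 + t1]]·D(u), and set A(x) := A4·x³ + A3·x² + A2·x + A1, B1(x) := A4·x + A3, B2(x) := A4·x² + A3·x + A2 + diag(0, −2t2). Then the zero-curvature (isomonodromy) equations hold: for j = 1, 2, for all x ∈ ℂ and all (t1,t2) ∈ D: ∂A(x)/∂tⱼ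 − ∂Bⱼ(x)/∂x + A(x)·Bⱼ(x) − Bⱼ(x)·A(x) = 0. -/

import Mathlib

open Filter Topology Matrix

/-- Fourth Painlevé Hamiltonian `HIV(a,b;t;q,p)`. -/
noncomputable def HIV (a b t q p : ℂ) : ℂ := p * q * (p - q - t) + b * p + a * q

/-- Degenerate Garnier Hamiltonian of pattern 5 (first time variable). -/
noncomputable def HG5_1 (θ t1 t2 q1 p1 q2 p2 : ℂ) : ℂ :=
  -q1 * (q1 * p1 - θ) + q2 * (q1 * (p2 + q2) - 2 * p1 + t1) + p1 * (p2 - 2 * t2)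

/-- Degenerate Garnier Hamiltonian of pattern 5 (second time variable). -/
noncomputable def HG5_2 (θ t1 t2 q1 p1 q2 p2 : ℂ) : ℂ :=
  HIV (-1) θ (2 * t2) q2 p2 + q1 * q2 * (q1 * q2 - 2 * p1 + t1)
    + p1 * (p1 - p2 * q1 - t1)

/-- Conjugation by `D(u) = diag(1,u)` : `M ↦ D(u)⁻¹ M D(u)`. -/
noncomputable def dconj (u : ℂ) (M : Matrix (Fin 2) (Fin 2) ℂ) : Matrix (Fin 2) (Fin 2) ℂ :=
  (Matrix.diagonal ![(1 : ℂ), u])⁻¹ * M * Matrix.diagonal ![(1 : ℂ), u]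

/-- `A4 = diag(0,1)`. -/
noncomputable def G5A4 : Matrix (Fin 2) (Fin 2) ℂ := Matrix.diagonal ![0, 1]

/-- `A3 = D(u)⁻¹ [[0,q2],[−1,0]] D(u)`. -/
noncomputable def G5A3 (q2 u : ℂ) : Matrix (Fin 2) (Fin 2) ℂ :=
  dconj u !![0, q2; -1, 0]

/-- `A2 = D(u)⁻¹ [[−q2,−p1],[−q1,q2+2t2]] D(u)`. -/
noncomputable def G5A2 (t2 q1 p1 q2 u : ℂ) : Matrix (Fin 2) (Fin 2) ℂ :=
  dconj u !![-q2, -p1; -q1, q2 + 2 * t2]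

/-- `A1 = D(u)⁻¹ [[p1−q1q2, p1q1−(p2−q2−2t2)q2−θ],[−p2, −p1+q1q2+t1]] D(u)`. -/
noncomputable def G5A1 (θ t1 t2 q1 p1 q2 p2 u : ℂ) : Matrix (Fin 2) (Fin 2) ℂ :=
  dconj u !![p1 - q1 * q2, p1 * q1 - (p2 - q2 - 2 * t2) * q2 - θ;
             -p2, -p1 + q1 * q2 + t1]

/-- `A(x) = A4 x³ + A3 x² + A2 x + A1`. -/
noncomputable def G5AX (θ t1 t2 q1 p1 q2 p2 u x : ℂ) : Matrix (Fin 2) (Fin 2) ℂ :=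
  x ^ 3 • G5A4 + x ^ 2 • G5A3 q2 u + x • G5A2 t2 q1 p1 q2 u
    + G5A1 θ t1 t2 q1 p1 q2 p2 u

/-- `B1(x) = A4 x + A3`. -/
noncomputable def G5B1 (q2 u x : ℂ) : Matrix (Fin 2) (Fin 2) ℂ := x • G5A4 + G5A3 q2 u

/-- `B2(x) = A4 x² + A3 x + A2 + diag(0,−2t2)`. -/
noncomputable def G5B2 (t2 q1 p1 q2 u x : ℂ) : Matrix (Fin 2) (Fin 2) ℂ :=
  x ^ 2 • G5A4 + x • G5A3 q2 u + G5A2 t2 q1 p1 q2 u + Matrix.diagonal ![0, -2 * t2]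

/-!
Conjugation by the diagonal gauge `D(u) = diag(1, u)` with `u' = c u` turns the derivative of
`D⁻¹ N D` into `D⁻¹ (N' + [N, diag(0, c)]) D`. Hence the zero-curvature equations for the gauged
Lax pair are the conjugates of those for the ungauged matrices with `Bⱼ` shifted by the gauge term
`diag(0, c)`, and these are polynomial identities in `(q1, p1, q2, p2, t1, t2, x)` once Hamilton's
equations are substituted for the derivatives of the canonical variables.
-/

section DiagonalGauge

variable {𝕜 n : Type*} [Fintype n] [DecidableEq n]

theorem inv_diagonal_of_ne_zero [Field 𝕜] {d : n → 𝕜} (hd : ∀ k, d k ≠ 0) :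
    (diagonal d)⁻¹ = diagonal d⁻¹ :=
  inv_eq_left_inv <| by
    rw [diagonal_mul_diagonal, ← diagonal_one]
    exact congrArg diagonal (funext fun k => inv_mul_cancel₀ (hd k))

theorem conj_diagonal_apply [Field 𝕜] {d : n → 𝕜} (hd : ∀ k, d k ≠ 0) (M : Matrix n n 𝕜)
    (i j : n) : ((diagonal d)⁻¹ * M * diagonal d) i j = (d i)⁻¹ * M i j * d j := by
  rw [inv_diagonal_of_ne_zero hd, mul_diagonal, diagonal_mul, Pi.inv_apply]

theorem hasDerivAt_conj_diagonal_apply [NontriviallyNormedField 𝕜] {d : 𝕜 → n → 𝕜}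
    {κ : n → 𝕜} {M : 𝕜 → Matrix n n 𝕜} {M' : Matrix n n 𝕜} {t : 𝕜}
    (hd : ∀ k, HasDerivAt (fun s => d s k) (κ k * d t k) t) (hd0 : ∀ k, d t k ≠ 0)
    (hM : ∀ i j, HasDerivAt (fun s => M s i j) (M' i j) t) (i j : n) :
    HasDerivAt (fun s => ((diagonal (d s))⁻¹ * M s * diagonal (d s)) i j)
      (((diagonal (d t))⁻¹ * (M' + M t * diagonal κ - diagonal κ * M t) * diagonal (d t)) i j)
      t := by
  have hne : ∀ᶠ s in 𝓝 t, ∀ k, d s k ≠ 0 :=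
    eventually_all.2 fun k => (hd k).continuousAt.eventually_ne (hd0 k)
  refine ((((hd i).inv (hd0 i)).mul (hM i j)).mul (hd j) |>.congr_of_eventuallyEq
    (hne.mono fun s hs => conj_diagonal_apply hs (M s) i j)).congr_deriv ?_
  rw [conj_diagonal_apply hd0]
  simp only [Matrix.sub_apply, Matrix.add_apply, mul_diagonal, diagonal_mul, Pi.mul_apply,
    Pi.inv_apply]
  field_simp [hd0 i]
  ring

end DiagonalGauge

section Dconj

variable {u : ℂ}

theorem isUnit_det_gauge (hu : u ≠ 0) : IsUnit (diagonal ![(1 : ℂ), u]).det := by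
  simp [det_diagonal, hu]

theorem dconj_add (M N : Matrix (Fin 2) (Fin 2) ℂ) : dconj u (M + N) = dconj u M + dconj u N := by
  simp only [dconj, Matrix.mul_add, Matrix.add_mul]

theorem dconj_sub (M N : Matrix (Fin 2) (Fin 2) ℂ) : dconj u (M - N) = dconj u M - dconj u N := by
  simp only [dconj, Matrix.mul_sub, Matrix.sub_mul]

theorem dconj_smul (c : ℂ) (M : Matrix (Fin 2) (Fin 2) ℂ) : dconj u (c • M) = c • dconj u M := by
  simp only [dconj, Matrix.mul_smul, Matrix.smul_mul]

theorem dconj_mul (hu : u ≠ 0) (M N : Matrix (Fin 2) (Fin 2) ℂ) :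
    dconj u (M * N) = dconj u M * dconj u N := by
  simp only [dconj, Matrix.mul_assoc, mul_nonsing_inv_cancel_left _ _ (isUnit_det_gauge hu)]

theorem dconj_diagonal (hu : u ≠ 0) (v : Fin 2 → ℂ) : dconj u (diagonal v) = diagonal v := by
  rw [dconj, Matrix.mul_assoc, diagonal_mul_diagonal, funext fun k => mul_comm (v k) _,
    ← diagonal_mul_diagonal, nonsing_inv_mul_cancel_left _ _ (isUnit_det_gauge hu)]

theorem dconj_sub_commutator (hu : u ≠ 0) (C N B : Matrix (Fin 2) (Fin 2) ℂ) :
    dconj u (C - (N * B - B * N))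
      = dconj u C - (dconj u N * dconj u B - dconj u B * dconj u N) := by
  rw [dconj_sub, dconj_sub, dconj_mul hu, dconj_mul hu]

end Dconj

theorem hasDerivAt_dconj_apply {u : ℂ → ℂ} {c t : ℂ} {M : ℂ → Matrix (Fin 2) (Fin 2) ℂ}
    {M' : Matrix (Fin 2) (Fin 2) ℂ} (hu : HasDerivAt u (c * u t) t) (hu0 : u t ≠ 0)
    (hM : ∀ i j, HasDerivAt (fun s => M s i j) (M' i j) t) (i j : Fin 2) :
    HasDerivAt (fun s => dconj (u s) (M s) i j)
      (dconj (u t) (M' + M t * diagonal ![0, c] - diagonal ![0, c] * M t) i j) t :=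
  hasDerivAt_conj_diagonal_apply (d := fun s => ![1, u s]) (κ := ![0, c])
    (Fin.forall_fin_two.2 ⟨by simpa using hasDerivAt_const t (1 : ℂ), by simpa using hu⟩)
    (Fin.forall_fin_two.2 ⟨one_ne_zero, hu0⟩) hM i j

noncomputable def ungaugedG5AX (θ t1 t2 q1 p1 q2 p2 x : ℂ) : Matrix (Fin 2) (Fin 2) ℂ :=
  !![-(x * q2) + p1 - q1 * q2, x ^ 2 * q2 - x * p1 + p1 * q1 - (p2 - q2 - 2 * t2) * q2 - θ;
     -x ^ 2 - x * q1 - p2, x ^ 3 + x * (q2 + 2 * t2) - p1 + q1 * q2 + t1]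

noncomputable def ungaugedG5AXTangent (t2 q1 p1 q2 p2 x dt1 dt2 dq1 dp1 dq2 dp2 : ℂ) :
    Matrix (Fin 2) (Fin 2) ℂ :=
  !![-(x * dq2) + dp1 - (dq1 * q2 + q1 * dq2),
     x ^ 2 * dq2 - x * dp1 + (dp1 * q1 + p1 * dq1)
       - ((dp2 - dq2 - 2 * dt2) * q2 + (p2 - q2 - 2 * t2) * dq2);
     -(x * dq1) - dp2, x * (dq2 + 2 * dt2) - dp1 + (dq1 * q2 + q1 * dq2) + dt1]

theorem hasDerivAt_ungaugedG5AX_apply (θ x : ℂ) {T1 T2 Q1 P1 Q2 P2 : ℂ → ℂ}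
    {t dt1 dt2 dq1 dp1 dq2 dp2 : ℂ} (hT1 : HasDerivAt T1 dt1 t) (hT2 : HasDerivAt T2 dt2 t)
    (hQ1 : HasDerivAt Q1 dq1 t) (hP1 : HasDerivAt P1 dp1 t) (hQ2 : HasDerivAt Q2 dq2 t)
    (hP2 : HasDerivAt P2 dp2 t) (i j : Fin 2) :
    HasDerivAt (fun s => ungaugedG5AX θ (T1 s) (T2 s) (Q1 s) (P1 s) (Q2 s) (P2 s) x i j)
      (ungaugedG5AXTangent (T2 t) (Q1 t) (P1 t) (Q2 t) (P2 t) x dt1 dt2 dq1 dp1 dq2 dp2 i j)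
      t := by
  have := hT1.differentiableAt
  have := hT2.differentiableAt
  have := hQ1.differentiableAt
  have := hP1.differentiableAt
  have := hQ2.differentiableAt
  have := hP2.differentiableAt
  fin_cases i <;> fin_cases j <;>
  · simp only [ungaugedG5AX, ungaugedG5AXTangent, Fin.zero_eta, Fin.mk_one, Fin.isValue, of_apply,
      cons_val', cons_val_zero, cons_val_one, cons_val_fin_one]
    refine (hasDerivAt_deriv_iff.2 (by fun_prop)).congr_deriv ?_
    simp (disch := fun_prop) [deriv_fun_add, deriv_fun_sub, deriv_fun_mul, hT1.deriv, hT2.deriv,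
      hQ1.deriv, hP1.deriv, hQ2.deriv, hP2.deriv]

section Hamilton

variable (θ t1 t2 q1 p1 q2 p2 : ℂ)

theorem deriv_HG5_1_q1 :
    deriv (fun w => HG5_1 θ t1 t2 w p1 q2 p2) q1 = θ - 2 * q1 * p1 + q2 * (p2 + q2) := by
  simp (disch := fun_prop) [HG5_1, deriv_fun_add, deriv_fun_sub, deriv_fun_mul]; ring

theorem deriv_HG5_1_p1 :
    deriv (fun w => HG5_1 θ t1 t2 q1 w q2 p2) p1 = -q1 ^ 2 - 2 * q2 + p2 - 2 * t2 := by
  simp (disch := fun_prop) [HG5_1, deriv_fun_add, deriv_fun_sub, deriv_fun_mul]; ring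

theorem deriv_HG5_1_q2 :
    deriv (fun w => HG5_1 θ t1 t2 q1 p1 w p2) q2 = q1 * (p2 + 2 * q2) - 2 * p1 + t1 := by
  simp (disch := fun_prop) [HG5_1, deriv_fun_add, deriv_fun_sub, deriv_fun_mul]; ring

theorem deriv_HG5_1_p2 :
    deriv (fun w => HG5_1 θ t1 t2 q1 p1 q2 w) p2 = q1 * q2 + p1 := by
  simp (disch := fun_prop) [HG5_1, deriv_fun_add, deriv_fun_sub, deriv_fun_mul]; ring

theorem deriv_HG5_2_q1 :
    deriv (fun w => HG5_2 θ t1 t2 w p1 q2 p2) q1 = q2 * (2 * q1 * q2 - 2 * p1 + t1) - p1 * p2 := by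
  simp (disch := fun_prop) [HG5_2, HIV, deriv_fun_add, deriv_fun_sub, deriv_fun_mul]; ring

theorem deriv_HG5_2_p1 :
    deriv (fun w => HG5_2 θ t1 t2 q1 w q2 p2) p1 = 2 * p1 - 2 * q1 * q2 - p2 * q1 - t1 := by
  simp (disch := fun_prop) [HG5_2, HIV, deriv_fun_add, deriv_fun_sub, deriv_fun_mul]; ring

theorem deriv_HG5_2_q2 :
    deriv (fun w => HG5_2 θ t1 t2 q1 p1 w p2) q2
      = p2 * (p2 - 2 * q2 - 2 * t2) - 1 + q1 * (2 * q1 * q2 - 2 * p1 + t1) := by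
  simp (disch := fun_prop) [HG5_2, HIV, deriv_fun_add, deriv_fun_sub, deriv_fun_mul]; ring

theorem deriv_HG5_2_p2 :
    deriv (fun w => HG5_2 θ t1 t2 q1 p1 q2 w) p2 = q2 * (2 * p2 - q2 - 2 * t2) + θ - q1 * p1 := by
  simp (disch := fun_prop) [HG5_2, HIV, deriv_fun_add, deriv_fun_sub, deriv_fun_mul]; ring

end Hamilton

section LaxPair

variable {θ t1 t2 q1 p1 q2 p2 u : ℂ}

theorem dconj_G5A4 (hu : u ≠ 0) : dconj u G5A4 = G5A4 := dconj_diagonal hu _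

theorem G5AX_eq_dconj (hu : u ≠ 0) (x : ℂ) :
    G5AX θ t1 t2 q1 p1 q2 p2 u x = dconj u (ungaugedG5AX θ t1 t2 q1 p1 q2 p2 x) := by
  rw [G5AX, G5A3, G5A2, G5A1, ← dconj_G5A4 hu]
  simp only [← dconj_smul, ← dconj_add]
  congr 1
  ext i j
  fin_cases i <;> fin_cases j <;> simp [G5A4, ungaugedG5AX] <;> ring

theorem G5B1_eq_dconj (hu : u ≠ 0) (x : ℂ) :
    G5B1 q2 u x = dconj u (x • G5A4 + !![0, q2; -1, 0]) := by
  rw [G5B1, G5A3, dconj_add, dconj_smul, dconj_G5A4 hu]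

theorem G5B2_eq_dconj (hu : u ≠ 0) (x : ℂ) :
    G5B2 t2 q1 p1 q2 u x = dconj u (x ^ 2 • G5A4 + x • !![0, q2; -1, 0]
      + !![-q2, -p1; -q1, q2 + 2 * t2] + diagonal ![0, -2 * t2]) := by
  rw [G5B2, G5A3, G5A2, dconj_add, dconj_add, dconj_add, dconj_smul, dconj_smul, dconj_G5A4 hu,
    dconj_diagonal hu]

theorem deriv_G5B1_apply (x : ℂ) (i j : Fin 2) :
    deriv (fun y => G5B1 q2 u y i j) x = G5A4 i j := by
  simp [G5B1]

theorem deriv_G5B2_apply (x : ℂ) (i j : Fin 2) :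
    deriv (fun y => G5B2 t2 q1 p1 q2 u y i j) x = ((2 * x) • G5A4 + G5A3 q2 u) i j := by
  simp (disch := fun_prop) [G5B2, deriv_fun_add, deriv_fun_mul]

end LaxPair

theorem hasDerivAt_G5AX_apply (θ x : ℂ) {T1 T2 Q1 P1 Q2 P2 U : ℂ → ℂ}
    {t c dt1 dt2 dq1 dp1 dq2 dp2 : ℂ} (hT1 : HasDerivAt T1 dt1 t) (hT2 : HasDerivAt T2 dt2 t)
    (hQ1 : HasDerivAt Q1 dq1 t) (hP1 : HasDerivAt P1 dp1 t) (hQ2 : HasDerivAt Q2 dq2 t)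
    (hP2 : HasDerivAt P2 dp2 t) (hU : HasDerivAt U (c * U t) t) (hU0 : U t ≠ 0) (i j : Fin 2) :
    HasDerivAt (fun s => G5AX θ (T1 s) (T2 s) (Q1 s) (P1 s) (Q2 s) (P2 s) (U s) x i j)
      (dconj (U t)
        (ungaugedG5AXTangent (T2 t) (Q1 t) (P1 t) (Q2 t) (P2 t) x dt1 dt2 dq1 dp1 dq2 dp2
          + ungaugedG5AX θ (T1 t) (T2 t) (Q1 t) (P1 t) (Q2 t) (P2 t) x * diagonal ![0, c]
          - diagonal ![0, c] * ungaugedG5AX θ (T1 t) (T2 t) (Q1 t) (P1 t) (Q2 t) (P2 t) x) i j)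
      t := by
  have hgauge : ∀ᶠ s in 𝓝 t, G5AX θ (T1 s) (T2 s) (Q1 s) (P1 s) (Q2 s) (P2 s) (U s) x
      = dconj (U s) (ungaugedG5AX θ (T1 s) (T2 s) (Q1 s) (P1 s) (Q2 s) (P2 s) x) :=
    (hU.continuousAt.eventually_ne hU0).mono fun s hs => G5AX_eq_dconj hs x
  exact (hasDerivAt_dconj_apply hU hU0
    (hasDerivAt_ungaugedG5AX_apply θ x hT1 hT2 hQ1 hP1 hQ2 hP2) i j).congr_of_eventuallyEq
    (hgauge.mono fun s hs => congrFun (congrFun hs i) j)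

theorem G5AX_zeroCurvature_t1 {θ t1 t2 x : ℂ} {Q1 P1 Q2 P2 U : ℂ → ℂ}
    (hQ1 : HasDerivAt Q1 (deriv (fun w => HG5_1 θ t1 t2 (Q1 t1) w (Q2 t1) (P2 t1)) (P1 t1)) t1)
    (hP1 : HasDerivAt P1 (-(deriv (fun w => HG5_1 θ t1 t2 w (P1 t1) (Q2 t1) (P2 t1)) (Q1 t1))) t1)
    (hQ2 : HasDerivAt Q2 (deriv (fun w => HG5_1 θ t1 t2 (Q1 t1) (P1 t1) (Q2 t1) w) (P2 t1)) t1)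
    (hP2 : HasDerivAt P2 (-(deriv (fun w => HG5_1 θ t1 t2 (Q1 t1) (P1 t1) w (P2 t1)) (Q2 t1))) t1)
    (hU : HasDerivAt U (-(Q1 t1) * U t1) t1) (hU0 : U t1 ≠ 0) (i j : Fin 2) :
    HasDerivAt (fun s => G5AX θ s t2 (Q1 s) (P1 s) (Q2 s) (P2 s) (U s) x i j)
      (deriv (fun y => G5B1 (Q2 t1) (U t1) y i j) x
        - (G5AX θ t1 t2 (Q1 t1) (P1 t1) (Q2 t1) (P2 t1) (U t1) x * G5B1 (Q2 t1) (U t1) x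
          - G5B1 (Q2 t1) (U t1) x * G5AX θ t1 t2 (Q1 t1) (P1 t1) (Q2 t1) (P2 t1) (U t1) x) i j)
      t1 := by
  refine (hasDerivAt_G5AX_apply θ x (hasDerivAt_id' t1) (hasDerivAt_const t1 t2) hQ1 hP1 hQ2 hP2
    hU hU0 i j).congr_deriv ?_
  rw [deriv_G5B1_apply, ← Matrix.sub_apply, ← dconj_G5A4 hU0, G5AX_eq_dconj hU0,
    G5B1_eq_dconj hU0, ← dconj_sub_commutator hU0, deriv_HG5_1_q1, deriv_HG5_1_p1, deriv_HG5_1_q2,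
    deriv_HG5_1_p2]
  congr 1
  simp only [G5A4, diagonal_fin_two, ungaugedG5AX, ungaugedG5AXTangent, smul_of, of_add_of,
    of_sub_of, Matrix.mul_fin_two]
  ext i j
  fin_cases i <;> fin_cases j <;> simp <;> ring

theorem G5AX_zeroCurvature_t2 {θ t1 t2 x : ℂ} {Q1 P1 Q2 P2 U : ℂ → ℂ}
    (hQ1 : HasDerivAt Q1 (deriv (fun w => HG5_2 θ t1 t2 (Q1 t2) w (Q2 t2) (P2 t2)) (P1 t2)) t2)
    (hP1 : HasDerivAt P1 (-(deriv (fun w => HG5_2 θ t1 t2 w (P1 t2) (Q2 t2) (P2 t2)) (Q1 t2))) t2)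
    (hQ2 : HasDerivAt Q2 (deriv (fun w => HG5_2 θ t1 t2 (Q1 t2) (P1 t2) (Q2 t2) w) (P2 t2)) t2)
    (hP2 : HasDerivAt P2 (-(deriv (fun w => HG5_2 θ t1 t2 (Q1 t2) (P1 t2) w (P2 t2)) (Q2 t2))) t2)
    (hU : HasDerivAt U ((2 * t2 - P2 t2) * U t2) t2) (hU0 : U t2 ≠ 0) (i j : Fin 2) :
    HasDerivAt (fun s => G5AX θ t1 s (Q1 s) (P1 s) (Q2 s) (P2 s) (U s) x i j)
      (deriv (fun y => G5B2 t2 (Q1 t2) (P1 t2) (Q2 t2) (U t2) y i j) x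
        - (G5AX θ t1 t2 (Q1 t2) (P1 t2) (Q2 t2) (P2 t2) (U t2) x
              * G5B2 t2 (Q1 t2) (P1 t2) (Q2 t2) (U t2) x
          - G5B2 t2 (Q1 t2) (P1 t2) (Q2 t2) (U t2) x
              * G5AX θ t1 t2 (Q1 t2) (P1 t2) (Q2 t2) (P2 t2) (U t2) x) i j)
      t2 := by
  refine (hasDerivAt_G5AX_apply θ x (hasDerivAt_const t2 t1) (hasDerivAt_id' t2) hQ1 hP1 hQ2 hP2
    hU hU0 i j).congr_deriv ?_
  rw [deriv_G5B2_apply, ← Matrix.sub_apply, G5A3, ← dconj_G5A4 hU0, ← dconj_smul, ← dconj_add,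
    G5AX_eq_dconj hU0, G5B2_eq_dconj hU0, ← dconj_sub_commutator hU0, deriv_HG5_2_q1,
    deriv_HG5_2_p1, deriv_HG5_2_q2, deriv_HG5_2_p2]
  congr 1
  simp only [G5A4, diagonal_fin_two, ungaugedG5AX, ungaugedG5AXTangent, smul_of, of_add_of,
    of_sub_of, Matrix.mul_fin_two]
  ext i j
  fin_cases i <;> fin_cases j <;> simp <;> ring

theorem stmt3_general (θ : ℂ) (D : Set (ℂ × ℂ))
    (q1 p1 q2 p2 u : ℂ × ℂ → ℂ)
    (hu0 : ∀ z ∈ D, u z ≠ 0)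
    (hq1t1 : ∀ z ∈ D, HasDerivAt (fun s => q1 (s, z.2))
      (deriv (fun w => HG5_1 θ z.1 z.2 (q1 z) w (q2 z) (p2 z)) (p1 z)) z.1)
    (hp1t1 : ∀ z ∈ D, HasDerivAt (fun s => p1 (s, z.2))
      (-(deriv (fun w => HG5_1 θ z.1 z.2 w (p1 z) (q2 z) (p2 z)) (q1 z))) z.1)
    (hq2t1 : ∀ z ∈ D, HasDerivAt (fun s => q2 (s, z.2))
      (deriv (fun w => HG5_1 θ z.1 z.2 (q1 z) (p1 z) (q2 z) w) (p2 z)) z.1)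
    (hp2t1 : ∀ z ∈ D, HasDerivAt (fun s => p2 (s, z.2))
      (-(deriv (fun w => HG5_1 θ z.1 z.2 (q1 z) (p1 z) w (p2 z)) (q2 z))) z.1)
    (hq1t2 : ∀ z ∈ D, HasDerivAt (fun s => q1 (z.1, s))
      (deriv (fun w => HG5_2 θ z.1 z.2 (q1 z) w (q2 z) (p2 z)) (p1 z)) z.2)
    (hp1t2 : ∀ z ∈ D, HasDerivAt (fun s => p1 (z.1, s))
      (-(deriv (fun w => HG5_2 θ z.1 z.2 w (p1 z) (q2 z) (p2 z)) (q1 z))) z.2)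
    (hq2t2 : ∀ z ∈ D, HasDerivAt (fun s => q2 (z.1, s))
      (deriv (fun w => HG5_2 θ z.1 z.2 (q1 z) (p1 z) (q2 z) w) (p2 z)) z.2)
    (hp2t2 : ∀ z ∈ D, HasDerivAt (fun s => p2 (z.1, s))
      (-(deriv (fun w => HG5_2 θ z.1 z.2 (q1 z) (p1 z) w (p2 z)) (q2 z))) z.2)
    (hut1 : ∀ z ∈ D, HasDerivAt (fun s => u (s, z.2)) (-(q1 z) * u z) z.1)
    (hut2 : ∀ z ∈ D, HasDerivAt (fun s => u (z.1, s)) ((2 * z.2 - p2 z) * u z) z.2) :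
    ∀ z ∈ D, ∀ x : ℂ, ∀ i j : Fin 2,
      (HasDerivAt
          (fun s => G5AX θ s z.2 (q1 (s, z.2)) (p1 (s, z.2)) (q2 (s, z.2)) (p2 (s, z.2))
            (u (s, z.2)) x i j)
          (deriv (fun y => G5B1 (q2 z) (u z) y i j) x
            - (G5AX θ z.1 z.2 (q1 z) (p1 z) (q2 z) (p2 z) (u z) x
                  * G5B1 (q2 z) (u z) x
                - G5B1 (q2 z) (u z) x
                  * G5AX θ z.1 z.2 (q1 z) (p1 z) (q2 z) (p2 z) (u z) x) i j) z.1)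
      ∧
      (HasDerivAt
          (fun s => G5AX θ z.1 s (q1 (z.1, s)) (p1 (z.1, s)) (q2 (z.1, s)) (p2 (z.1, s))
            (u (z.1, s)) x i j)
          (deriv (fun y => G5B2 z.2 (q1 z) (p1 z) (q2 z) (u z) y i j) x
            - (G5AX θ z.1 z.2 (q1 z) (p1 z) (q2 z) (p2 z) (u z) x
                  * G5B2 z.2 (q1 z) (p1 z) (q2 z) (u z) x
                - G5B2 z.2 (q1 z) (p1 z) (q2 z) (u z) x
                  * G5AX θ z.1 z.2 (q1 z) (p1 z) (q2 z) (p2 z) (u z) x) i j) z.2) := by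
  intro z hz x i j
  exact ⟨G5AX_zeroCurvature_t1 (Q1 := fun s => q1 (s, z.2)) (P1 := fun s => p1 (s, z.2))
      (Q2 := fun s => q2 (s, z.2)) (P2 := fun s => p2 (s, z.2)) (U := fun s => u (s, z.2))
      (hq1t1 z hz) (hp1t1 z hz) (hq2t1 z hz) (hp2t1 z hz) (hut1 z hz) (hu0 z hz) i j,
    G5AX_zeroCurvature_t2 (Q1 := fun s => q1 (z.1, s)) (P1 := fun s => p1 (z.1, s))
      (Q2 := fun s => q2 (z.1, s)) (P2 := fun s => p2 (z.1, s)) (U := fun s => u (z.1, s))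
      (hq1t2 z hz) (hp1t2 z hz) (hq2t2 z hz) (hp2t2 z hz) (hut2 z hz) (hu0 z hz) i j⟩

/-- The Hamiltonian system of the Garnier system of pattern 5 (together with the gauge
equations) implies the zero-curvature (isomonodromy) equations for its Lax pair. -/
theorem stmt3 (θ : ℂ) (D : Set (ℂ × ℂ)) (hD : IsOpen D)
    (q1 p1 q2 p2 u : ℂ × ℂ → ℂ)
    (hq1a : AnalyticOnNhd ℂ q1 D) (hp1a : AnalyticOnNhd ℂ p1 D)
    (hq2a : AnalyticOnNhd ℂ q2 D) (hp2a : AnalyticOnNhd ℂ p2 D)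
    (hua : AnalyticOnNhd ℂ u D) (hu0 : ∀ z ∈ D, u z ≠ 0)
    (hq1t1 : ∀ z ∈ D, HasDerivAt (fun s => q1 (s, z.2))
      (deriv (fun w => HG5_1 θ z.1 z.2 (q1 z) w (q2 z) (p2 z)) (p1 z)) z.1)
    (hp1t1 : ∀ z ∈ D, HasDerivAt (fun s => p1 (s, z.2))
      (-(deriv (fun w => HG5_1 θ z.1 z.2 w (p1 z) (q2 z) (p2 z)) (q1 z))) z.1)
    (hq2t1 : ∀ z ∈ D, HasDerivAt (fun s => q2 (s, z.2))
      (deriv (fun w => HG5_1 θ z.1 z.2 (q1 z) (p1 z) (q2 z) w) (p2 z)) z.1)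
    (hp2t1 : ∀ z ∈ D, HasDerivAt (fun s => p2 (s, z.2))
      (-(deriv (fun w => HG5_1 θ z.1 z.2 (q1 z) (p1 z) w (p2 z)) (q2 z))) z.1)
    (hq1t2 : ∀ z ∈ D, HasDerivAt (fun s => q1 (z.1, s))
      (deriv (fun w => HG5_2 θ z.1 z.2 (q1 z) w (q2 z) (p2 z)) (p1 z)) z.2)
    (hp1t2 : ∀ z ∈ D, HasDerivAt (fun s => p1 (z.1, s))
      (-(deriv (fun w => HG5_2 θ z.1 z.2 w (p1 z) (q2 z) (p2 z)) (q1 z))) z.2)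
    (hq2t2 : ∀ z ∈ D, HasDerivAt (fun s => q2 (z.1, s))
      (deriv (fun w => HG5_2 θ z.1 z.2 (q1 z) (p1 z) (q2 z) w) (p2 z)) z.2)
    (hp2t2 : ∀ z ∈ D, HasDerivAt (fun s => p2 (z.1, s))
      (-(deriv (fun w => HG5_2 θ z.1 z.2 (q1 z) (p1 z) w (p2 z)) (q2 z))) z.2)
    (hut1 : ∀ z ∈ D, HasDerivAt (fun s => u (s, z.2)) (-(q1 z) * u z) z.1)
    (hut2 : ∀ z ∈ D, HasDerivAt (fun s => u (z.1, s)) ((2 * z.2 - p2 z) * u z) z.2) :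
    ∀ z ∈ D, ∀ x : ℂ, ∀ i j : Fin 2,
      (HasDerivAt
          (fun s => G5AX θ s z.2 (q1 (s, z.2)) (p1 (s, z.2)) (q2 (s, z.2)) (p2 (s, z.2))
            (u (s, z.2)) x i j)
          (deriv (fun y => G5B1 (q2 z) (u z) y i j) x
            - (G5AX θ z.1 z.2 (q1 z) (p1 z) (q2 z) (p2 z) (u z) x
                  * G5B1 (q2 z) (u z) x
                - G5B1 (q2 z) (u z) x
                  * G5AX θ z.1 z.2 (q1 z) (p1 z) (q2 z) (p2 z) (u z) x) i j) z.1)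
      ∧
      (HasDerivAt
          (fun s => G5AX θ z.1 s (q1 (z.1, s)) (p1 (z.1, s)) (q2 (z.1, s)) (p2 (z.1, s))
            (u (z.1, s)) x i j)
          (deriv (fun y => G5B2 z.2 (q1 z) (p1 z) (q2 z) (u z) y i j) x
            - (G5AX θ z.1 z.2 (q1 z) (p1 z) (q2 z) (p2 z) (u z) x
                  * G5B2 z.2 (q1 z) (p1 z) (q2 z) (u z) x
                - G5B2 z.2 (q1 z) (p1 z) (q2 z) (u z) x
                  * G5AX θ z.1 z.2 (q1 z) (p1 z) (q2 z) (p2 z) (u z) x) i j) z.2) :=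
  stmt3_general θ D q1 p1 q2 p2 u hu0 hq1t1 hp1t1 hq2t1 hp2t1 hq1t2 hp1t2 hq2t2 hp2t2 hut1 hut2
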